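/- Let B = (μ_1,…,μ_K) be a K-armed Bernoulli bandit with K ≥ 2 whose arm means are pairwise distinct, and let δ_B = μ*_B − (the second-largest arm mean). Let M be a probabilistic finite automaton playing B and ε > 0 a real number such that, for every state q of M, the probability (starting the run from q) that a non-optimal arm is played at q or at the immediately following state is at least ε. Then for every N ≥ 1, Reg(M,B,2N)/(2N) ≥ ε · δ_B / 2; in particular, liminf_{N→∞} Reg(M,B,N)/N ≥ ε · δ_B / 2 > 0. -/
import Mathlib


open Filter

structure PFA (Q : Type) [Fintype Q] (K : ℕ) where
  q0 : Q
  act : Q → Fin K → ℝ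
  act_nonneg : ∀ q a, 0 ≤ act q a
  act_sum_one : ∀ q, ∑ a, act q a = 1
  trans : Q → Fin K × Bool → Q → ℝ
  trans_nonneg : ∀ q o q', 0 ≤ trans q o q'
  trans_sum_one : ∀ q o, ∑ q', trans q o q' = 1

noncomputable def stateDist {Q : Type} [Fintype Q] [DecidableEq Q] {K : ℕ}
    (M : PFA Q K) (B : Fin K → ℝ) : ℕ → Q → ℝ
  | 0 => fun q => if q = M.q0 then 1 else 0
  | n + 1 => fun q' => ∑ q, stateDist M B n q *
      ∑ a, M.act q a * (B a * M.trans q (a, true) q' + (1 - B a) * M.trans q (a, false) q')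

noncomputable def expReward {Q : Type} [Fintype Q] [DecidableEq Q] {K : ℕ}
    (M : PFA Q K) (B : Fin K → ℝ) (t : ℕ) : ℝ :=
  ∑ q, stateDist M B t q * ∑ a, M.act q a * B a

noncomputable def muStar {K : ℕ} (B : Fin K → ℝ) : ℝ := ⨆ k, B k

noncomputable def Reg {Q : Type} [Fintype Q] [DecidableEq Q] {K : ℕ}
    (M : PFA Q K) (B : Fin K → ℝ) (N : ℕ) : ℝ :=
  N * muStar B - ∑ t ∈ Finset.range N, expReward M B t

def IsBandit {K : ℕ} (B : Fin K → ℝ) : Prop := ∀ k, 0 ≤ B k ∧ B k ≤ 1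

def Generic {K : ℕ} (B : Fin K → ℝ) : Prop :=
  muStar B < 1 ∧ (∀ i j : Fin K, i ≠ j → B i ≠ B j) ∧ (K = 2 → ∀ k, 0 < B k)

def IsPermOf {K : ℕ} (B B' : Fin K → ℝ) : Prop :=
  ∃ ρ : Equiv.Perm (Fin K), ∀ k, B k = B' (ρ k)

/-- The second-largest arm mean: the supremum of the means of the non-optimal arms. -/
noncomputable def secondMax {K : ℕ} (B : Fin K → ℝ) : ℝ :=
  ⨆ k : {k : Fin K // B k < muStar B}, B k.1

/-- The probability that an optimal arm is played at state `q`. -/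
noncomputable def optPlayProb {Q : Type} [Fintype Q] [DecidableEq Q] {K : ℕ}
    (M : PFA Q K) (B : Fin K → ℝ) (q : Q) : ℝ :=
  ∑ a, (if B a = muStar B then M.act q a else 0)

/-- Starting the run of `M` on `B` from state `q`, the probability that an optimal arm
is played both at `q` and at the immediately following state. -/
noncomputable def twoStepOptProb {Q : Type} [Fintype Q] [DecidableEq Q] {K : ℕ}
    (M : PFA Q K) (B : Fin K → ℝ) (q : Q) : ℝ :=
  ∑ a, (if B a = muStar B then M.act q a else 0) *
    ∑ q', (B a * M.trans q (a, true) q' + (1 - B a) * M.trans q (a, false) q') *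
      optPlayProb M B q'

/-- Starting the run of `M` on `B` from state `q`, the probability that a non-optimal arm
is played at `q` or at the immediately following state. -/
noncomputable def twoStepBadProb {Q : Type} [Fintype Q] [DecidableEq Q] {K : ℕ}
    (M : PFA Q K) (B : Fin K → ℝ) (q : Q) : ℝ :=
  1 - twoStepOptProb M B q

open Topology
section AuxProof

variable {Q : Type} [Fintype Q] [DecidableEq Q] {K : ℕ}

noncomputable def kerP (M : PFA Q K) (B : Fin K → ℝ) (q : Q) (a : Fin K) (q' : Q) : ℝ :=
  B a * M.trans q (a, true) q' + (1 - B a) * M.trans q (a, false) q'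

lemma kerP_nonneg (M : PFA Q K) {B : Fin K → ℝ} (hB : IsBandit B) (q : Q) (a : Fin K) (q' : Q) :
    0 ≤ kerP M B q a q' := by
  have h1 := (hB a).1; have h2 := (hB a).2
  have t1 := M.trans_nonneg q (a, true) q'
  have t2 := M.trans_nonneg q (a, false) q'
  have e1 : 0 ≤ (1 - B a) * M.trans q (a, false) q' := mul_nonneg (by linarith) t2
  have e2 : 0 ≤ B a * M.trans q (a, true) q' := mul_nonneg h1 t1
  unfold kerP; linarith

lemma kerP_sum (M : PFA Q K) (B : Fin K → ℝ) (q : Q) (a : Fin K) :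
    ∑ q', kerP M B q a q' = 1 := by
  unfold kerP
  rw [Finset.sum_add_distrib, ← Finset.mul_sum, ← Finset.mul_sum,
    M.trans_sum_one, M.trans_sum_one]
  ring

lemma stateDist_succ (M : PFA Q K) (B : Fin K → ℝ) (n : ℕ) (q' : Q) :
    stateDist M B (n+1) q' = ∑ q, stateDist M B n q * ∑ a, M.act q a * kerP M B q a q' := rfl

lemma stateDist_nonneg (M : PFA Q K) {B : Fin K → ℝ} (hB : IsBandit B) (t : ℕ) (q : Q) :
    0 ≤ stateDist M B t q := by
  induction t generalizing q with
  | zero =>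
    show (0:ℝ) ≤ if q = M.q0 then 1 else 0
    split <;> norm_num
  | succ n ih =>
    rw [stateDist_succ]
    apply Finset.sum_nonneg
    intro q' _
    exact mul_nonneg (ih q') (Finset.sum_nonneg fun a _ =>
      mul_nonneg (M.act_nonneg q' a) (kerP_nonneg M hB _ _ _))

lemma stateDist_sum (M : PFA Q K) (B : Fin K → ℝ) (t : ℕ) :
    ∑ q, stateDist M B t q = 1 := by
  induction t with
  | zero =>
    show ∑ q, (if q = M.q0 then (1:ℝ) else 0) = 1
    simp
  | succ n ih =>
    have key : ∀ q : Q, ∑ q', ∑ a, M.act q a * kerP M B q a q' = 1 := by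
      intro q
      rw [Finset.sum_comm]
      have h2 : ∀ a : Fin K, ∑ q', M.act q a * kerP M B q a q' = M.act q a := by
        intro a; rw [← Finset.mul_sum, kerP_sum, mul_one]
      rw [Finset.sum_congr rfl fun a _ => h2 a, M.act_sum_one]
    calc ∑ q', stateDist M B (n+1) q'
        = ∑ q', ∑ q, stateDist M B n q * ∑ a, M.act q a * kerP M B q a q' :=
          Finset.sum_congr rfl fun q' _ => stateDist_succ M B n q'
      _ = ∑ q, ∑ q', stateDist M B n q * ∑ a, M.act q a * kerP M B q a q' :=
          Finset.sum_comm
      _ = ∑ q, stateDist M B n q * ∑ q', ∑ a, M.act q a * kerP M B q a q' :=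
          Finset.sum_congr rfl fun q _ => (Finset.mul_sum _ _ _).symm
      _ = 1 := by
          rw [Finset.sum_congr rfl fun q _ => by rw [key q, mul_one]]; exact ih

noncomputable def loss (M : PFA Q K) (B : Fin K → ℝ) (q : Q) : ℝ :=
  ∑ a, M.act q a * (muStar B - B a)

lemma loss_nonneg (M : PFA Q K) {B : Fin K → ℝ} (hopt : ∀ a, B a ≤ muStar B) (q : Q) :
    0 ≤ loss M B q :=
  Finset.sum_nonneg fun a _ => mul_nonneg (M.act_nonneg q a) (by linarith [hopt a])

lemma optPlayProb_le_one (M : PFA Q K) (B : Fin K → ℝ) (q : Q) :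
    optPlayProb M B q ≤ 1 := by
  rw [← M.act_sum_one q]
  apply Finset.sum_le_sum
  intro a _
  split
  · exact le_refl _
  · exact M.act_nonneg q a

lemma loss_ge (M : PFA Q K) {B : Fin K → ℝ}
    (hopt : ∀ a, B a ≤ muStar B)
    (hsec : ∀ a, ¬ B a = muStar B → muStar B - secondMax B ≤ muStar B - B a)
    (q : Q) :
    (muStar B - secondMax B) * (1 - optPlayProb M B q) ≤ loss M B q := by
  have h1 : 1 - optPlayProb M B q = ∑ a, (if B a = muStar B then 0 else M.act q a) := by
    rw [← M.act_sum_one q]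
    unfold optPlayProb
    rw [← Finset.sum_sub_distrib]
    apply Finset.sum_congr rfl
    intro a _
    split <;> ring
  rw [h1, Finset.mul_sum]
  unfold loss
  apply Finset.sum_le_sum
  intro a _
  by_cases h : B a = muStar B
  · simp [h]
  · rw [if_neg h]
    calc (muStar B - secondMax B) * M.act q a = M.act q a * (muStar B - secondMax B) := by ring
      _ ≤ M.act q a * (muStar B - B a) :=
        mul_le_mul_of_nonneg_left (hsec a h) (M.act_nonneg q a)

lemma regret_step (M : PFA Q K) (B : Fin K → ℝ) (t : ℕ) :
    muStar B - expReward M B t = ∑ q, stateDist M B t q * loss M B q := by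
  have hl : ∀ q : Q, loss M B q = muStar B - ∑ a, M.act q a * B a := by
    intro q
    unfold loss
    rw [Finset.sum_congr rfl (fun a _ => mul_sub (M.act q a) (muStar B) (B a)),
      Finset.sum_sub_distrib, ← Finset.sum_mul, M.act_sum_one, one_mul]
  rw [Finset.sum_congr rfl fun q _ => by rw [hl q]]
  rw [Finset.sum_congr rfl fun q (_ : q ∈ Finset.univ) =>
    mul_sub (stateDist M B t q) (muStar B) (∑ a, M.act q a * B a)]
  rw [Finset.sum_sub_distrib, ← Finset.sum_mul, stateDist_sum, one_mul]
  rfl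

lemma step2 (M : PFA Q K) (B : Fin K → ℝ) (t : ℕ) :
    ∑ q', stateDist M B (t+1) q' * loss M B q'
      = ∑ q, stateDist M B t q * ∑ q', (∑ a, M.act q a * kerP M B q a q') * loss M B q' := by
  calc ∑ q', stateDist M B (t+1) q' * loss M B q'
      = ∑ q', ∑ q, stateDist M B t q * ((∑ a, M.act q a * kerP M B q a q') * loss M B q') := by
        apply Finset.sum_congr rfl
        intro q' _
        rw [stateDist_succ, Finset.sum_mul]
        exact Finset.sum_congr rfl fun q _ => by ring
    _ = ∑ q, ∑ q', stateDist M B t q * ((∑ a, M.act q a * kerP M B q a q') * loss M B q') :=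
        Finset.sum_comm
    _ = ∑ q, stateDist M B t q * ∑ q', (∑ a, M.act q a * kerP M B q a q') * loss M B q' :=
        Finset.sum_congr rfl fun q _ => (Finset.mul_sum _ _ _).symm

lemma twoStepOpt_eq (M : PFA Q K) (B : Fin K → ℝ) (q : Q) :
    twoStepOptProb M B q = ∑ a, (if B a = muStar B then M.act q a else 0) *
      ∑ q', kerP M B q a q' * optPlayProb M B q' := rfl

lemma inner_ge (M : PFA Q K) {B : Fin K → ℝ} (hB : IsBandit B)
    (hopt : ∀ a, B a ≤ muStar B)
    (hsec : ∀ a, ¬ B a = muStar B → muStar B - secondMax B ≤ muStar B - B a)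
    (hδ : 0 ≤ muStar B - secondMax B) (q : Q) :
    (muStar B - secondMax B) * (optPlayProb M B q - twoStepOptProb M B q) ≤
      ∑ q', (∑ a, M.act q a * kerP M B q a q') * loss M B q' := by
  set δ := muStar B - secondMax B with hδdef
  set F : Fin K → ℝ := fun a => if B a = muStar B then M.act q a else 0 with hF
  set S : Fin K → ℝ := fun a => ∑ q', kerP M B q a q' * optPlayProb M B q' with hS
  set T : Fin K → ℝ := fun a => ∑ q', kerP M B q a q' * loss M B q' with hT
  have hrhs : ∑ q', (∑ a, M.act q a * kerP M B q a q') * loss M B q'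
      = ∑ a, M.act q a * T a := by
    calc ∑ q', (∑ a, M.act q a * kerP M B q a q') * loss M B q'
        = ∑ q', ∑ a, M.act q a * (kerP M B q a q' * loss M B q') := by
          apply Finset.sum_congr rfl
          intro q' _
          rw [Finset.sum_mul]
          exact Finset.sum_congr rfl fun a _ => by ring
      _ = ∑ a, ∑ q', M.act q a * (kerP M B q a q' * loss M B q') := Finset.sum_comm
      _ = ∑ a, M.act q a * T a :=
          Finset.sum_congr rfl fun a _ => (Finset.mul_sum _ _ _).symm
  have e1 : optPlayProb M B q = ∑ a, F a := rfl
  have e2 : twoStepOptProb M B q = ∑ a, F a * S a := rfl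
  have hlhs : δ * (optPlayProb M B q - twoStepOptProb M B q)
      = ∑ a, F a * (δ * (1 - S a)) := by
    rw [e1, e2, ← Finset.sum_sub_distrib, Finset.mul_sum]
    exact Finset.sum_congr rfl fun a _ => by ring
  rw [hrhs, hlhs]
  apply Finset.sum_le_sum
  intro a _
  have hT_ge : δ * (1 - S a) ≤ T a := by
    have hexp : δ * (1 - S a) = ∑ q', kerP M B q a q' * (δ * (1 - optPlayProb M B q')) := by
      rw [hS]
      rw [show (1:ℝ) = ∑ q', kerP M B q a q' from (kerP_sum M B q a).symm]
      rw [← Finset.sum_sub_distrib, Finset.mul_sum]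
      apply Finset.sum_congr rfl
      intro q' _
      rw [show ∑ x, kerP M B q a x = 1 from kerP_sum M B q a]
      ring
    rw [hexp, hT]
    apply Finset.sum_le_sum
    intro q' _
    exact mul_le_mul_of_nonneg_left (loss_ge M hopt hsec q') (kerP_nonneg M hB q a q')
  have hT_nonneg : 0 ≤ T a :=
    Finset.sum_nonneg fun q' _ =>
      mul_nonneg (kerP_nonneg M hB q a q') (loss_nonneg M hopt q')
  by_cases h : B a = muStar B
  · have hFa : F a = M.act q a := by rw [hF]; simp [h]
    rw [hFa]
    exact mul_le_mul_of_nonneg_left hT_ge (M.act_nonneg q a)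
  · have hFa : F a = 0 := by rw [hF]; simp [h]
    rw [hFa, zero_mul]
    exact mul_nonneg (M.act_nonneg q a) hT_nonneg

lemma pair_bound (M : PFA Q K) {B : Fin K → ℝ} (hB : IsBandit B)
    (hopt : ∀ a, B a ≤ muStar B)
    (hsec : ∀ a, ¬ B a = muStar B → muStar B - secondMax B ≤ muStar B - B a)
    (hδ : 0 ≤ muStar B - secondMax B)
    {ε : ℝ} (hbad : ∀ q : Q, ε ≤ twoStepBadProb M B q) (t : ℕ) :
    ε * (muStar B - secondMax B) ≤
      (muStar B - expReward M B t) + (muStar B - expReward M B (t+1)) := by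
  rw [regret_step, regret_step, step2, ← Finset.sum_add_distrib]
  have key : ∀ q : Q, stateDist M B t q * (ε * (muStar B - secondMax B)) ≤
      stateDist M B t q * loss M B q +
      stateDist M B t q * ∑ q', (∑ a, M.act q a * kerP M B q a q') * loss M B q' := by
    intro q
    rw [← mul_add]
    apply mul_le_mul_of_nonneg_left _ (stateDist_nonneg M hB t q)
    have h1 := loss_ge M hopt hsec q
    have h2 := inner_ge M hB hopt hsec hδ q
    have h3 : ε * (muStar B - secondMax B) ≤ twoStepBadProb M B q * (muStar B - secondMax B) :=
      mul_le_mul_of_nonneg_right (hbad q) hδ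
    have h4 : twoStepBadProb M B q * (muStar B - secondMax B) =
        (muStar B - secondMax B) * (1 - optPlayProb M B q) +
        (muStar B - secondMax B) * (optPlayProb M B q - twoStepOptProb M B q) := by
      unfold twoStepBadProb; ring
    linarith
  calc ε * (muStar B - secondMax B)
      = ∑ q, stateDist M B t q * (ε * (muStar B - secondMax B)) := by
        rw [← Finset.sum_mul, stateDist_sum, one_mul]
    _ ≤ _ := Finset.sum_le_sum fun q _ => key q

end AuxProof
/-- Let `B` have pairwise distinct arm means, `K ≥ 2`, and
`δ_B = μ*_B − secondMax B`. If `M` is a PFA such that from every state `q` the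
probability that a non-optimal arm is played at `q` or at the immediately following state
is at least `ε > 0`, then for every `N ≥ 1`, `Reg(M,B,2N)/(2N) ≥ ε δ_B / 2`; in
particular `liminf_{N→∞} Reg(M,B,N)/N ≥ ε δ_B / 2 > 0`. -/
theorem everywhere_bad_regret_bound {K : ℕ} (hK : 2 ≤ K) {Q : Type} [Fintype Q] [DecidableEq Q]
    (M : PFA Q K) (B : Fin K → ℝ) (hB : IsBandit B)
    (hdist : ∀ i j : Fin K, i ≠ j → B i ≠ B j)
    (ε : ℝ) (hε : 0 < ε)
    (hbad : ∀ q : Q, ε ≤ twoStepBadProb M B q) :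
    (∀ N : ℕ, 1 ≤ N →
        ε * (muStar B - secondMax B) / 2 ≤ Reg M B (2 * N) / ((2 * N : ℕ) : ℝ)) ∧
    ε * (muStar B - secondMax B) / 2 ≤
      Filter.liminf (fun N : ℕ => Reg M B N / (N : ℝ)) Filter.atTop ∧
    0 < ε * (muStar B - secondMax B) / 2 := by
  classical
  have hKpos : 0 < K := by omega
  haveI hne : Nonempty (Fin K) := ⟨⟨0, hKpos⟩⟩
  have hbdd : BddAbove (Set.range B) := (Set.finite_range B).bddAbove
  have hopt : ∀ a, B a ≤ muStar B := fun a => le_ciSup hbdd a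
  obtain ⟨k0, hk0⟩ := Finite.exists_max B
  have hmu : muStar B = B k0 := le_antisymm (ciSup_le hk0) (le_ciSup hbdd k0)
  obtain ⟨i, hi⟩ := Fintype.exists_ne_of_one_lt_card (by simpa using (by omega : 1 < K)) k0
  have hiopt : B i < muStar B := by
    rcases lt_or_eq_of_le (hopt i) with h | h
    · exact h
    · exact absurd (h.trans hmu) (hdist i k0 hi)
  haveI hSne : Nonempty {k : Fin K // B k < muStar B} := ⟨⟨i, hiopt⟩⟩
  obtain ⟨m, hm⟩ := Finite.exists_max (fun k : {k : Fin K // B k < muStar B} => B k.1)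
  have hsecond_lt : secondMax B < muStar B := lt_of_le_of_lt (ciSup_le hm) m.2
  set δ := muStar B - secondMax B with hδdef
  have hδ : 0 < δ := by rw [hδdef]; linarith
  have hbddS : BddAbove (Set.range fun k : {k : Fin K // B k < muStar B} => B k.1) :=
    (Set.finite_range _).bddAbove
  have hsec : ∀ a, ¬ B a = muStar B → muStar B - secondMax B ≤ muStar B - B a := by
    intro a ha
    have h1 : B a < muStar B := lt_of_le_of_ne (hopt a) ha
    have h2 : B a ≤ secondMax B := le_ciSup hbddS ⟨a, h1⟩
    linarith
  have hReg : ∀ N : ℕ, Reg M B N = ∑ t ∈ Finset.range N, (muStar B - expReward M B t) := by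
    intro N
    unfold Reg
    rw [Finset.sum_sub_distrib, Finset.sum_const, Finset.card_range, nsmul_eq_mul]
  have hstep_nonneg : ∀ t, 0 ≤ muStar B - expReward M B t := by
    intro t
    rw [regret_step]
    exact Finset.sum_nonneg fun q _ =>
      mul_nonneg (stateDist_nonneg M hB t q) (loss_nonneg M hopt q)
  have hRegnn : ∀ N, 0 ≤ Reg M B N := fun N => by
    rw [hReg]; exact Finset.sum_nonneg fun t _ => hstep_nonneg t
  have hmono : ∀ m' n : ℕ, m' ≤ n → Reg M B m' ≤ Reg M B n := by
    intro m' n h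
    rw [hReg, hReg]
    exact Finset.sum_le_sum_of_subset_of_nonneg (Finset.range_subset_range.mpr h)
      fun t _ _ => hstep_nonneg t
  have hpair := pair_bound M hB hopt hsec (le_of_lt hδ) hbad
  have hkey : ∀ N : ℕ, (N : ℝ) * (ε * δ) ≤ Reg M B (2 * N) := by
    intro N
    induction N with
    | zero => simpa using hRegnn 0
    | succ n ih =>
      have e : 2 * (n + 1) = (2 * n + 1) + 1 := by ring
      rw [e, hReg, Finset.sum_range_succ, Finset.sum_range_succ]
      have hp := hpair (2 * n)
      rw [← hδdef] at hp
      push_cast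
      rw [hReg] at ih
      have expand : ((n:ℝ) + 1) * (ε * δ) = (n:ℝ) * (ε * δ) + ε * δ := by ring
      linarith
  set c := ε * δ with hc
  have hc0 : 0 < c := mul_pos hε hδ
  refine ⟨?_, ?_, ?_⟩
  · intro N hN
    have hNpos : (0:ℝ) < ((2 * N : ℕ) : ℝ) := by
      have : 0 < 2 * N := by omega
      exact_mod_cast this
    rw [le_div_iff₀ hNpos]
    have hk := hkey N
    have : ε * δ / 2 * ((2 * N : ℕ) : ℝ) = (N : ℝ) * (ε * δ) := by
      push_cast; ring
    rw [this]
    exact hk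
  · set g : ℕ → ℝ := fun N => c / 2 - c / 2 * (1 / (N : ℝ)) with hg
    have hgt : Tendsto g atTop (𝓝 (c / 2)) := by
      have h0 : Tendsto (fun N : ℕ => 1 / (N : ℝ)) atTop (𝓝 0) :=
        tendsto_one_div_atTop_nhds_zero_nat
      have h1 : Tendsto (fun N : ℕ => c / 2 * (1 / (N:ℝ))) atTop (𝓝 (c / 2 * 0)) :=
        h0.const_mul (c / 2)
      have h2 : Tendsto (fun N : ℕ => c / 2 - c / 2 * (1 / (N:ℝ))) atTop (𝓝 (c / 2 - c / 2 * 0)) :=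
        tendsto_const_nhds.sub h1
      simpa [hg] using h2
    have hglim : liminf g atTop = c / 2 := hgt.liminf_eq
    have hfub : ∀ N : ℕ, Reg M B N / (N : ℝ) ≤ muStar B := by
      intro N
      rcases Nat.eq_zero_or_pos N with h | h
      · subst h
        simp only [Nat.cast_zero, div_zero]
        exact le_trans (hB k0).1 (hopt k0)
      · have hNpos : (0:ℝ) < (N:ℝ) := by exact_mod_cast h
        rw [div_le_iff₀ hNpos]
        have hexp : ∀ t, 0 ≤ expReward M B t := by
          intro t
          apply Finset.sum_nonneg
          intro q _
          exact mul_nonneg (stateDist_nonneg M hB t q)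
            (Finset.sum_nonneg fun a _ => mul_nonneg (M.act_nonneg q a) (hB a).1)
        have : 0 ≤ ∑ t ∈ Finset.range N, expReward M B t :=
          Finset.sum_nonneg fun t _ => hexp t
        unfold Reg
        linarith [mul_comm (muStar B) (N:ℝ)]
    have hev : ∀ᶠ N : ℕ in atTop, g N ≤ Reg M B N / (N : ℝ) := by
      filter_upwards [eventually_ge_atTop 1] with N hN
      have hNR : (0:ℝ) < (N:ℝ) := by exact_mod_cast hN
      have hN0 : (N:ℝ) ≠ 0 := ne_of_gt hNR
      rw [le_div_iff₀ hNR]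
      have h1N : (1 / (N:ℝ)) * N = 1 := one_div_mul_cancel hN0
      have hgN : g N * N = c / 2 * N - c / 2 := by
        calc g N * N = c / 2 * N - c / 2 * ((1 / (N:ℝ)) * N) := by rw [hg]; ring
          _ = c / 2 * N - c / 2 := by rw [h1N, mul_one]
      rw [hgN]
      have h1 : ((N / 2 : ℕ) : ℝ) * c ≤ Reg M B N :=
        le_trans (hkey (N / 2)) (hmono _ _ (by omega))
      have h2 : (N : ℝ) ≤ 2 * ((N / 2 : ℕ) : ℝ) + 1 := by
        have : N ≤ 2 * (N / 2) + 1 := by omega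
        exact_mod_cast this
      nlinarith [hc0.le]
    have hbd1 : IsBoundedUnder (· ≥ ·) atTop g := by
      refine ⟨0, ?_⟩
      rw [eventually_map]
      apply Eventually.of_forall
      intro N
      have h1N : 1 / (N:ℝ) ≤ 1 := by
        rcases Nat.eq_zero_or_pos N with h | h
        · subst h; norm_num
        · have : (1:ℝ) ≤ (N:ℝ) := by exact_mod_cast h
          rw [div_le_one (by linarith)]; exact this
      have h0N : 0 ≤ 1 / (N:ℝ) := by positivity
      show g N ≥ 0
      rw [hg]
      nlinarith [hc0.le]
    have hbd2 : IsCoboundedUnder (· ≥ ·) atTop (fun N : ℕ => Reg M B N / (N : ℝ)) :=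
      isCoboundedUnder_ge_of_le atTop hfub
    calc c / 2 = liminf g atTop := hglim.symm
      _ ≤ liminf (fun N : ℕ => Reg M B N / (N : ℝ)) atTop := liminf_le_liminf hev hbd1 hbd2
  · positivity
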